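/- Let R be a finite, reduced, crystallographic root system spanning a finite-dimensional real inner product space V, with base S and positive roots R⁺, and let S_P ⊊ S be a proper subset, with R_P⁺ the set of positive roots that are nonnegative integer combinations of elements of S_P. Then the Mukai inequality #(S∖S_P) · ( gcd_{β ∈ S∖S_P} n_β − 1 ) ≤ #(R⁺∖R_P⁺) holds, where n_β = 2 − ⟨Σ_{α ∈ R_P⁺} α, β^∨⟩. -/
import Mathlib


open scoped RealInnerProductSpace

/-- A finite, reduced, crystallographic root system `R` spanning a
finite-dimensional real inner product space `V`, together with a base `S`
(the simple roots), the corresponding set `Rpos` of positive roots,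
the integer coefficients `coeff α γ` of a root `α` in the base `S`,
the integer coefficients `ccoeff α γ` of the coroot `α^∨ = (2/(α,α))•α` of a
positive root in the simple coroots, and the integer Cartan pairings
`cartan α β = ⟨α, β^∨⟩ = 2(α,β)/(β,β)`. -/
structure RootSystemWithBase (V : Type*) [NormedAddCommGroup V]
    [InnerProductSpace ℝ V] [FiniteDimensional ℝ V] where
  R : Finset V
  S : Finset V
  Rpos : Finset V
  coeff : V → V → ℤ
  ccoeff : V → V → ℤ
  cartan : V → V → ℤ
  root_ne_zero : ∀ α ∈ R, α ≠ (0 : V)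
  span_top : Submodule.span ℝ (R : Set V) = ⊤
  neg_mem : ∀ α ∈ R, -α ∈ R
  reduced : ∀ α ∈ R, ∀ c : ℝ, c • α ∈ (R : Set V) → c = 1 ∨ c = -1
  cartan_eq : ∀ α ∈ R, ∀ β ∈ R, (cartan α β : ℝ) = 2 * ⟪α, β⟫ / ⟪β, β⟫
  reflect_mem : ∀ α ∈ R, ∀ β ∈ R, β - cartan β α • α ∈ R
  S_subset : ∀ γ ∈ S, γ ∈ Rpos
  Rpos_subset : ∀ α ∈ Rpos, α ∈ R
  S_indep : LinearIndependent ℝ (Subtype.val : {x // x ∈ S} → V)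
  root_eq_sum : ∀ α ∈ R, α = ∑ γ ∈ S, coeff α γ • γ
  mem_Rpos_iff : ∀ α ∈ R, (α ∈ Rpos ↔ ∀ γ ∈ S, 0 ≤ coeff α γ)
  pos_or_neg : ∀ α ∈ R, α ∈ Rpos ∨ -α ∈ Rpos
  coroot_eq_sum : ∀ α ∈ Rpos,
    (2 / ⟪α, α⟫) • α = ∑ γ ∈ S, ccoeff α γ • ((2 / ⟪γ, γ⟫) • γ)
  ccoeff_nonneg : ∀ α ∈ Rpos, ∀ γ ∈ S, 0 ≤ ccoeff α γ

namespace RootSystemWithBase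

variable {V : Type*} [NormedAddCommGroup V] [InnerProductSpace ℝ V]
  [FiniteDimensional ℝ V] (D : RootSystemWithBase V)

/-- The coroot `α^∨ = 2α/(α,α)` of a root `α`. -/
noncomputable def coroot (_D : RootSystemWithBase V) (α : V) : V := (2 / ⟪α, α⟫) • α

/-- The height of the coroot of a positive root: the sum of its coefficients
in the basis of simple coroots. -/
def ht (α : V) : ℤ := ∑ γ ∈ D.S, D.ccoeff α γ

open Classical in
/-- `R_P⁺`: the positive roots that are nonnegative integer combinations of
the elements of `SP`. -/
noncomputable def RP (SP : Finset V) : Finset V :=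
  D.Rpos.filter fun α => ∃ c : V → ℤ, (∀ γ, 0 ≤ c γ) ∧ α = ∑ γ ∈ SP, c γ • γ

/-- `n_β := 2 - ⟨Σ_{α ∈ R_P⁺} α, β^∨⟩`. -/
noncomputable def n (SP : Finset V) (β : V) : ℤ := 2 - ∑ α ∈ D.RP SP, D.cartan α β

/-- The reflection `s_α` in a root `α`, as a map `V → V`. -/
noncomputable def refl (_D : RootSystemWithBase V) (α : V) (x : V) : V := x - (2 * ⟪x, α⟫ / ⟪α, α⟫) • α

/-- `w : V → V` can be written as a composition of `t` simple reflections. -/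
noncomputable def IsWord (w : V → V) (t : ℕ) : Prop :=
  ∃ b : Fin t → V, (∀ i, b i ∈ D.S) ∧
    w = (List.ofFn fun i => D.refl (b i)).foldr (· ∘ ·) id

/-- Membership in the Weyl group `W` (as a group of maps `V → V`): `w` is a
composition of simple reflections. -/
noncomputable def MemW (w : V → V) : Prop := ∃ t, D.IsWord w t

/-- The length of an element of the Weyl group: the smallest number of simple
reflections needed to express it. -/
noncomputable def len (w : V → V) : ℕ := sInf {t | D.IsWord w t}

/-- The inversion set `I(w) = {α ∈ R⁺ : w(α) ∈ -R⁺}`. -/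
def inversions (w : V → V) : Set V := {α | α ∈ D.Rpos ∧ -(w α) ∈ D.Rpos}

/-- `W^j = {w ∈ W : I(w) ⊆ R⁺ ∖ R_j}`, the minimal length representatives of
`W/W_j`, where `R_j` is the set of roots lying in the span of `S ∖ {β}`. -/
noncomputable def Wj (β : V) : Set (V → V) :=
  {w | D.MemW w ∧
    ∀ α ∈ D.inversions w, α ∉ Submodule.span ℝ ((D.S : Set V) \ {β})}

end RootSystemWithBase


section Helpers

namespace RootSystemWithBase

variable {V : Type*} [NormedAddCommGroup V] [InnerProductSpace ℝ V]
  [FiniteDimensional ℝ V] [DecidableEq V] (D : RootSystemWithBase V)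

lemma sum_eq_zero {f : V → ℝ} (h : ∑ γ ∈ D.S, f γ • γ = 0) : ∀ γ ∈ D.S, f γ = 0 := by
  intro γ hγ
  have h2 := linearIndependent_iff'.mp D.S_indep Finset.univ (fun x => f x.1)
  have hs : ∑ i : {x // x ∈ D.S}, f i.1 • i.1 = 0 := by
    rw [Finset.sum_coe_sort D.S (fun γ => f γ • γ)]; exact h
  exact h2 hs ⟨γ, hγ⟩ (Finset.mem_univ _)

lemma coeff_unique {a b : V → ℤ} (h : ∑ γ ∈ D.S, a γ • γ = ∑ γ ∈ D.S, b γ • γ) :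
    ∀ γ ∈ D.S, a γ = b γ := by
  intro γ hγ
  have h0 : ∑ γ ∈ D.S, (fun x => ((a x : ℝ) - (b x : ℝ))) γ • γ = 0 := by
    simp only [sub_smul, Finset.sum_sub_distrib, Int.cast_smul_eq_zsmul, h, sub_self]
  have := D.sum_eq_zero h0 γ hγ
  have : (a γ : ℝ) = (b γ : ℝ) := by linarith [this]
  exact_mod_cast this

lemma root_mem_R_of_Rpos {α : V} (h : α ∈ D.Rpos) : α ∈ D.R := D.Rpos_subset α h

lemma inner_self_pos' {α : V} (h : α ∈ D.R) : (0:ℝ) < ⟪α, α⟫ := by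
  have h0 : ⟪α, α⟫ ≠ (0:ℝ) := fun hc => D.root_ne_zero α h (inner_self_eq_zero.mp hc)
  exact lt_of_le_of_ne real_inner_self_nonneg (Ne.symm h0)

lemma coeff_eq {α : V} (hα : α ∈ D.R) {a : V → ℤ} (h : α = ∑ γ ∈ D.S, a γ • γ) :
    ∀ γ ∈ D.S, D.coeff α γ = a γ :=
  D.coeff_unique ((D.root_eq_sum α hα).symm.trans h)

lemma inner_neg_of_cartan_neg {α β : V} (hα : α ∈ D.R) (hβ : β ∈ D.R)
    (h : D.cartan α β < 0) : ⟪α, β⟫ < 0 := by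
  have hc := D.cartan_eq α hα β hβ
  have hbb := D.inner_self_pos' hβ
  have h' : (D.cartan α β : ℝ) < 0 := by exact_mod_cast h
  rw [hc] at h'
  rcases div_neg_iff.mp h' with ⟨h1, h2⟩ | ⟨h1, h2⟩
  · linarith
  · linarith

lemma cartan_neg_of_inner_neg {α β : V} (hα : α ∈ D.R) (hβ : β ∈ D.R)
    (h : ⟪α, β⟫ < 0) : D.cartan α β < 0 := by
  have hc := D.cartan_eq α hα β hβ
  have hbb := D.inner_self_pos' hβ
  have h' : (D.cartan α β : ℝ) < 0 := by
    rw [hc]; exact div_neg_of_neg_of_pos (by linarith) hbb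
  exact_mod_cast h'

lemma cartan_nonpos_of_inner_nonpos {α β : V} (hα : α ∈ D.R) (hβ : β ∈ D.R)
    (h : ⟪α, β⟫ ≤ 0) : D.cartan α β ≤ 0 := by
  have hc := D.cartan_eq α hα β hβ
  have hbb := D.inner_self_pos' hβ
  have h' : (D.cartan α β : ℝ) ≤ 0 := by
    rw [hc]; exact div_nonpos_of_nonpos_of_nonneg (by linarith) (le_of_lt hbb)
  exact_mod_cast h'

lemma add_mem_of_inner_neg {α β : V} (hα : α ∈ D.R) (hβ : β ∈ D.R)
    (hin : ⟪α, β⟫ < 0) (hpar : ∀ c : ℝ, α ≠ c • β) : α + β ∈ D.R := by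
  have hαα := D.inner_self_pos' hα
  have hββ := D.inner_self_pos' hβ
  have hc1 := D.cartan_eq α hα β hβ
  have hc2 := D.cartan_eq β hβ α hα
  have hc1n : D.cartan α β < 0 := D.cartan_neg_of_inner_neg hα hβ hin
  have hc2n : D.cartan β α < 0 := D.cartan_neg_of_inner_neg hβ hα
    (by rwa [real_inner_comm])
  -- strict Cauchy-Schwarz
  have hne : ‖β‖ • (-α) ≠ ‖-α‖ • β := by
    intro heq
    apply hpar ((‖β‖)⁻¹ * (-‖α‖)) 
    have hβ0 : ‖β‖ ≠ 0 := norm_ne_zero_iff.2 (D.root_ne_zero β hβ)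
    have : ‖β‖ • α = (-‖α‖) • β := by
      rw [norm_neg] at heq
      have := congrArg (fun v => -v) heq
      simpa [smul_neg, neg_smul] using this
    calc α = (‖β‖)⁻¹ • (‖β‖ • α) := by rw [smul_smul, inv_mul_cancel₀ hβ0, one_smul]
    _ = ((‖β‖)⁻¹ * (-‖α‖)) • β := by rw [this, smul_smul]
  have hcs' : ⟪-α, β⟫ < ‖-α‖ * ‖β‖ := inner_lt_norm_mul_iff_real.2 hne
  have hcs : ⟪α, β⟫ * ⟪α, β⟫ < ⟪α, α⟫ * ⟪β, β⟫ := by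
    rw [inner_neg_left, norm_neg] at hcs'
    rw [real_inner_self_eq_norm_mul_norm, real_inner_self_eq_norm_mul_norm]
    nlinarith [hcs', hin, norm_nonneg α, norm_nonneg β]
  have e1 : (D.cartan α β : ℝ) * ⟪β, β⟫ = 2 * ⟪α, β⟫ := by
    rw [hc1]; field_simp
  have e2 : (D.cartan β α : ℝ) * ⟪α, α⟫ = 2 * ⟪β, α⟫ := by
    rw [hc2]; field_simp
  have e2' : (D.cartan β α : ℝ) * ⟪α, α⟫ = 2 * ⟪α, β⟫ := by
    rw [e2, real_inner_comm]
  have hprodR : (D.cartan α β : ℝ) * (D.cartan β α : ℝ) < 4 := by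
    nlinarith [hcs, mul_pos hαα hββ, e1, e2']
  have hprod : D.cartan α β * D.cartan β α < 4 := by exact_mod_cast hprodR
  have hcase : D.cartan α β = -1 ∨ D.cartan β α = -1 := by
    by_contra hcon
    push_neg at hcon
    obtain ⟨h1, h2⟩ := hcon
    have : D.cartan α β ≤ -2 := by omega
    have : D.cartan β α ≤ -2 := by omega
    nlinarith
  rcases hcase with h | h
  · have := D.reflect_mem β hβ α hα
    rw [h] at this
    simpa using this
  · have := D.reflect_mem α hα β hβ
    rw [h] at this
    have h2 : β - (-1 : ℤ) • α = α + β := by simp [add_comm]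
    rwa [h2] at this

lemma cartan_add_smul {α β : V} (hβ : β ∈ D.R) (k : ℤ) (hρ : α + k • β ∈ D.R)
    (hα : α ∈ D.R) : D.cartan (α + k • β) β = D.cartan α β + 2 * k := by
  have hbb := D.inner_self_pos' hβ
  have h1 := D.cartan_eq (α + k • β) hρ β hβ
  have h2 := D.cartan_eq α hα β hβ
  have hinner : ⟪α + k • β, β⟫ = ⟪α, β⟫ + (k : ℝ) * ⟪β, β⟫ := by
    rw [inner_add_left, ← Int.cast_smul_eq_zsmul ℝ, real_inner_smul_left]
  have : (D.cartan (α + k • β) β : ℝ) = (D.cartan α β : ℝ) + 2 * (k : ℝ) := by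
    rw [h1, h2, hinner]
    field_simp
  exact_mod_cast this

lemma string_mem {α β : V} (hα : α ∈ D.R) (hβ : β ∈ D.R)
    (hpar : ∀ c : ℝ, α ≠ c • β) :
    ∀ j : ℕ, (j : ℤ) ≤ -D.cartan α β → α + (j : ℤ) • β ∈ D.R := by
  intro j
  induction j using Nat.strong_induction_on with
  | _ j ih =>
    intro hj
    match j, ih, hj with
    | 0, _, _ => simpa using hα
    | (jj+1), ih, hj =>
      set j := jj + 1 with hjdef
      set m : ℤ := -D.cartan α β with hm
      by_cases h2 : 2 * (j : ℤ) ≤ m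
      · -- go up one step from j - 1
        have hprev : α + ((jj : ℕ) : ℤ) • β ∈ D.R := by
          apply ih jj (by omega)
          omega
        have hcp : D.cartan (α + (jj : ℤ) • β) β = D.cartan α β + 2 * jj :=
          D.cartan_add_smul hβ _ hprev hα
        have hcpneg : D.cartan (α + (jj : ℤ) • β) β < 0 := by
          rw [hcp]; push_cast at h2 ⊢; omega
        have hinneg : ⟪α + (jj : ℤ) • β, β⟫ < 0 :=
          D.inner_neg_of_cartan_neg hprev hβ hcpneg
        have hparp : ∀ c : ℝ, α + (jj : ℤ) • β ≠ c • β := by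
          intro c hc
          apply hpar (c - jj)
          have : α = c • β - (jj : ℤ) • β := by
            rw [← hc]; abel
          rw [this, ← Int.cast_smul_eq_zsmul ℝ, ← sub_smul]
          norm_num
        have := D.add_mem_of_inner_neg hprev hβ hinneg hparp
        have heq : α + (jj : ℤ) • β + β = α + ((j : ℕ) : ℤ) • β := by
          rw [hjdef]; push_cast; rw [add_smul]; simp [add_assoc]
        rwa [heq] at this
      · -- reflect the element at m - j
        have hj' : ((m - j).toNat : ℤ) = m - j := Int.toNat_of_nonneg (by omega)
        have hlt : (m - j).toNat < j := by omega
        have hρ : α + ((m - j).toNat : ℤ) • β ∈ D.R := by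
          apply ih _ hlt
          omega
        have hcρ : D.cartan (α + ((m - j).toNat : ℤ) • β) β
            = D.cartan α β + 2 * ((m - j).toNat : ℤ) :=
          D.cartan_add_smul hβ _ hρ hα
        have := D.reflect_mem β hβ _ hρ
        have heq : α + ((m - j).toNat : ℤ) • β
            - D.cartan (α + ((m - j).toNat : ℤ) • β) β • β = α + ((j : ℕ) : ℤ) • β := by
          rw [hcρ, add_sub_assoc, ← sub_smul]
          congr 1
          have : ((m - j).toNat : ℤ) - (D.cartan α β + 2 * ((m - j).toNat : ℤ)) = (j : ℤ) := by
            omega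
          rw [this]
        rwa [heq] at this

lemma mem_Rpos_of_coeff_pos {α γ₀ : V} (hα : α ∈ D.R) (hγ : γ₀ ∈ D.S)
    (h : 0 < D.coeff α γ₀) : α ∈ D.Rpos := by
  rcases D.pos_or_neg α hα with hp | hn
  · exact hp
  · exfalso
    have hnR : -α ∈ D.R := D.Rpos_subset _ hn
    have hrep : -α = ∑ γ ∈ D.S, (-(D.coeff α γ)) • γ := by
      have h1 := D.root_eq_sum α hα
      calc -α = -(∑ γ ∈ D.S, D.coeff α γ • γ) := by rw [← h1]
      _ = ∑ γ ∈ D.S, (-(D.coeff α γ)) • γ := by simp [neg_smul]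
    have hcoef := D.coeff_eq hnR hrep γ₀ hγ
    have := (D.mem_Rpos_iff _ hnR).1 hn γ₀ hγ
    omega

lemma coeff_simple {β : V} (hβ : β ∈ D.S) :
    ∀ γ ∈ D.S, D.coeff β γ = (fun γ => if γ = β then 1 else 0) γ := by
  apply D.coeff_eq (D.Rpos_subset β (D.S_subset β hβ))
  simp [ite_smul, Finset.sum_ite_eq', hβ]

lemma coeff_zero_of_mem_RP {SP : Finset V} (hsub : SP ⊆ D.S) {α : V}
    (hα : α ∈ D.RP SP) : ∀ γ ∈ D.S, γ ∉ SP → D.coeff α γ = 0 := by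
  have hα' := hα
  simp only [RP, Finset.mem_filter] at hα'
  obtain ⟨hαpos, c, hc0, hrep⟩ := hα'
  have hαR : α ∈ D.R := D.Rpos_subset α hαpos
  have hrep' : α = ∑ γ ∈ D.S, (fun γ => if γ ∈ SP then c γ else 0) γ • γ := by
    rw [hrep]
    rw [← Finset.sum_subset hsub (f := fun γ => (if γ ∈ SP then c γ else 0) • γ)
        (fun γ _ hγn => by simp [hγn])]
    exact Finset.sum_congr rfl (fun γ hγ => by simp [hγ])
  intro γ hγ hγn
  rw [D.coeff_eq hαR hrep' γ hγ]
  simp [hγn]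

lemma mem_RP_of_coeff {SP : Finset V} (hsub : SP ⊆ D.S) {α : V} (hα : α ∈ D.Rpos)
    (h : ∀ γ ∈ D.S, γ ∉ SP → D.coeff α γ = 0) : α ∈ D.RP SP := by
  simp only [RP, Finset.mem_filter]
  refine ⟨hα, fun γ => if γ ∈ SP then D.coeff α γ else 0, ?_, ?_⟩
  · intro γ
    by_cases hγ : γ ∈ SP
    · simpa [hγ] using (D.mem_Rpos_iff α (D.Rpos_subset α hα)).1 hα γ (hsub hγ)
    · simp [hγ]
  · have h1 : α = ∑ γ ∈ D.S, D.coeff α γ • γ := D.root_eq_sum α (D.Rpos_subset α hα)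
    have h2 : ∑ γ ∈ SP, D.coeff α γ • γ = ∑ γ ∈ D.S, D.coeff α γ • γ :=
      Finset.sum_subset hsub (fun γ hγS hγn => by rw [h γ hγS hγn, zero_smul])
    have h3 : ∑ γ ∈ SP, (if γ ∈ SP then D.coeff α γ else 0) • γ
        = ∑ γ ∈ SP, D.coeff α γ • γ :=
      Finset.sum_congr rfl (fun γ hγ => by simp [hγ])
    rw [h3, h2]
    exact h1

lemma RP_subset_Rpos {SP : Finset V} : D.RP SP ⊆ D.Rpos := by
  intro x hx
  simp only [RP, Finset.mem_filter] at hx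
  exact hx.1

lemma not_par {SP : Finset V} (hsub : SP ⊆ D.S) {α β : V} (hα : α ∈ D.RP SP)
    (hβS : β ∈ D.S) (hβP : β ∉ SP) : ∀ c : ℝ, α ≠ c • β := by
  intro c hc
  have hα' := hα
  simp only [RP, Finset.mem_filter] at hα'
  have hαpos : α ∈ D.Rpos := hα'.1
  have hαR : α ∈ D.R := D.Rpos_subset α hαpos
  have hrep := D.root_eq_sum α hαR
  have hzero : ∑ γ ∈ D.S,
      ((fun γ => (D.coeff α γ : ℝ) - if γ = β then c else 0) γ) • γ = 0 := by
    simp only [sub_smul, ite_smul, zero_smul, Finset.sum_sub_distrib,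
      Int.cast_smul_eq_zsmul, Finset.sum_ite_eq', hβS, if_true]
    rw [← hrep, ← hc, sub_self]
  have hfβ := D.sum_eq_zero hzero β hβS
  have hcoefβ : D.coeff α β = 0 := D.coeff_zero_of_mem_RP hsub hα β hβS hβP
  simp only [hcoefβ, Int.cast_zero, if_true, zero_sub, neg_eq_zero] at hfβ
  apply D.root_ne_zero α hαR
  rw [hc, hfβ, zero_smul]

lemma inner_nonpos_simple {γ β : V} (hγ : γ ∈ D.S) (hβ : β ∈ D.S) (hne : γ ≠ β) :
    ⟪γ, β⟫ ≤ 0 := by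
  by_contra hpos
  push_neg at hpos
  have hγR : γ ∈ D.R := D.Rpos_subset γ (D.S_subset γ hγ)
  have hβR : β ∈ D.R := D.Rpos_subset β (D.S_subset β hβ)
  have hnegβ : -β ∈ D.R := D.neg_mem β hβR
  have hin : ⟪γ, -β⟫ < 0 := by rw [inner_neg_right]; linarith
  have hpar : ∀ c : ℝ, γ ≠ c • (-β) := by
    intro c hcc
    rw [smul_neg] at hcc
    have h0 : ∑ x ∈ D.S,
        ((fun x => (if x = γ then (1:ℝ) else 0) - if x = β then (-c) else 0) x) • x = 0 := by
      simp only [sub_smul, ite_smul, zero_smul, one_smul, Finset.sum_sub_distrib,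
        Finset.sum_ite_eq', hγ, hβ, if_true]
      rw [neg_smul]
      rw [hcc]
      abel
    have := D.sum_eq_zero h0 γ hγ
    simp [hne] at this
  have hsum := D.add_mem_of_inner_neg hγR hnegβ hin hpar
  rcases D.pos_or_neg _ hsum with hp | hn
  · have hrep : γ + -β = ∑ x ∈ D.S,
        ((fun x => (if x = γ then (1:ℤ) else 0) - if x = β then 1 else 0) x) • x := by
      simp only [sub_smul, ite_smul, zero_smul, one_smul, Finset.sum_sub_distrib,
        Finset.sum_ite_eq', hγ, hβ, if_true]
      abel
    have hc := D.coeff_eq hsum hrep β hβ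
    have hge := (D.mem_Rpos_iff _ hsum).1 hp β hβ
    rw [hc] at hge
    simp [Ne.symm hne] at hge
  · have hnR : -(γ + -β) ∈ D.R := D.Rpos_subset _ hn
    have hrep : -(γ + -β) = ∑ x ∈ D.S,
        ((fun x => (if x = β then (1:ℤ) else 0) - if x = γ then 1 else 0) x) • x := by
      simp only [sub_smul, ite_smul, zero_smul, one_smul, Finset.sum_sub_distrib,
        Finset.sum_ite_eq', hγ, hβ, if_true]
      abel
    have hc := D.coeff_eq hnR hrep γ hγ
    have hge := (D.mem_Rpos_iff _ hnR).1 hn γ hγ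
    rw [hc] at hge
    simp [hne] at hge

lemma inner_nonpos_RP {SP : Finset V} (hsub : SP ⊆ D.S) {α β : V} (hα : α ∈ D.RP SP)
    (hβS : β ∈ D.S) (hβP : β ∉ SP) : ⟪α, β⟫ ≤ 0 := by
  have hα' := hα
  simp only [RP, Finset.mem_filter] at hα'
  obtain ⟨hαpos, c, hc0, hrep⟩ := hα'
  rw [hrep, sum_inner]
  apply Finset.sum_nonpos
  intro γ hγ
  have h1 : ⟪γ, β⟫ ≤ 0 := D.inner_nonpos_simple (hsub hγ) hβS (by rintro rfl; exact hβP hγ)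
  have h2 : (0:ℝ) ≤ (c γ : ℝ) := by exact_mod_cast hc0 γ
  rw [← Int.cast_smul_eq_zsmul ℝ, real_inner_smul_left]
  exact mul_nonpos_of_nonneg_of_nonpos h2 h1

end RootSystemWithBase

end Helpers

/-- For a proper subset `S_P ⊊ S`, the Mukai inequality
`#(S∖S_P) · ( gcd_{β ∈ S∖S_P} n_β − 1 ) ≤ #(R⁺ ∖ R_P⁺)` holds, where
`n_β = 2 − ⟨Σ_{α ∈ R_P⁺} α, β^∨⟩`. -/
theorem mukai_inequality {V : Type*} [NormedAddCommGroup V]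
    [InnerProductSpace ℝ V] [FiniteDimensional ℝ V] [DecidableEq V]
    (D : RootSystemWithBase V) (SP : Finset V) (hSP : SP ⊂ D.S) :
    ((D.S \ SP).card : ℤ) * ((D.S \ SP).gcd (fun β => D.n SP β) - 1) ≤
      ((D.Rpos \ D.RP SP).card : ℤ) := by
  classical
  have hsub : SP ⊆ D.S := hSP.subset
  set SC := D.S \ SP with hSC
  set T : V → Finset V := fun β => (D.Rpos \ D.RP SP).filter
    (fun α => ∀ γ ∈ D.S, γ ∉ SP → γ ≠ β → D.coeff α γ = 0) with hT
  have hTsub : ∀ β, T β ⊆ D.Rpos \ D.RP SP := fun β => Finset.filter_subset _ _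
  -- disjointness
  have hdisj : ∀ β ∈ SC, ∀ β' ∈ SC, β ≠ β' → Disjoint (T β) (T β') := by
    intro β hβ β' hβ' hne
    rw [Finset.disjoint_left]
    intro α hαβ hαβ'
    have h1 := Finset.mem_filter.mp hαβ
    have h2 := Finset.mem_filter.mp hαβ'
    have hαs := Finset.mem_sdiff.mp h1.1
    apply hαs.2
    apply D.mem_RP_of_coeff hsub hαs.1
    intro γ hγ hγn
    by_cases hγβ : γ = β
    · exact h2.2 γ hγ hγn (by rw [hγβ]; exact hne)
    · exact h1.2 γ hγ hγn hγβ
  have hcard : ∑ β ∈ SC, (T β).card ≤ (D.Rpos \ D.RP SP).card := by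
    calc ∑ β ∈ SC, (T β).card = (SC.biUnion T).card := (Finset.card_biUnion hdisj).symm
    _ ≤ _ := Finset.card_le_card (Finset.biUnion_subset.mpr (fun β _ => hTsub β))
  -- key per-β bound
  have hm : ∀ β ∈ SC, ∀ α ∈ D.RP SP, 0 ≤ -D.cartan α β := by
    intro β hβ α hα
    obtain ⟨hβS, hβP⟩ := Finset.mem_sdiff.mp hβ
    have hαR : α ∈ D.R := D.Rpos_subset α (D.RP_subset_Rpos hα)
    have hβR : β ∈ D.R := D.Rpos_subset β (D.S_subset β hβS)
    have := D.cartan_nonpos_of_inner_nonpos hαR hβR (D.inner_nonpos_RP hsub hα hβS hβP)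
    omega
  have hnval : ∀ β, D.n SP β = 2 + ∑ α ∈ D.RP SP, (-D.cartan α β) := by
    intro β
    simp only [RootSystemWithBase.n, Finset.sum_neg_distrib]
    ring
  have hkey : ∀ β ∈ SC, D.n SP β ≤ 1 + ((T β).card : ℤ) := by
    intro β hβ
    obtain ⟨hβS, hβP⟩ := Finset.mem_sdiff.mp hβ
    have hβR : β ∈ D.R := D.Rpos_subset β (D.S_subset β hβS)
    -- β itself belongs to T β
    have hβT : β ∈ T β := by
      rw [hT]
      simp only [Finset.mem_filter, Finset.mem_sdiff]
      refine ⟨⟨D.S_subset β hβS, ?_⟩, ?_⟩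
      · intro hmem
        have := D.coeff_zero_of_mem_RP hsub hmem β hβS hβP
        have h1 := D.coeff_simple hβS β hβS
        simp at h1
        omega
      · intro γ hγ _ hγβ
        have := D.coeff_simple hβS γ hγ
        simpa [hγβ] using this
    -- the sigma set of root-string elements
    set U : Finset ((_ : V) × ℤ) :=
      (D.RP SP).sigma (fun α => Finset.Icc (1:ℤ) (-D.cartan α β)) with hUdef
    have hUcard : (U.card : ℤ) = ∑ α ∈ D.RP SP, (-D.cartan α β) := by
      rw [hUdef, Finset.card_sigma]
      push_cast
      apply Finset.sum_congr rfl
      intro α hα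
      rw [Int.card_Icc]
      have := hm β hβ α hα
      omega
    -- properties of string elements
    have hstring : ∀ p ∈ U, p.1 + p.2 • β ∈ D.R ∧
        (∀ γ ∈ D.S, D.coeff (p.1 + p.2 • β) γ
          = D.coeff p.1 γ + if γ = β then p.2 else 0) := by
      rintro ⟨α, j⟩ hp
      obtain ⟨hαRP, hj⟩ := Finset.mem_sigma.mp hp
      dsimp only at hαRP hj
      obtain ⟨hj1, hj2⟩ := Finset.mem_Icc.mp hj
      have hαR : α ∈ D.R := D.Rpos_subset α (D.RP_subset_Rpos hαRP)
      have hpar := D.not_par hsub hαRP hβS hβP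
      have hroot : α + j • β ∈ D.R := by
        have h1 := D.string_mem hαR hβR hpar j.toNat
          (by rw [Int.toNat_of_nonneg (by omega)]; omega)
        rwa [Int.toNat_of_nonneg (by omega)] at h1
      refine ⟨hroot, ?_⟩
      apply D.coeff_eq hroot
      simp only [add_smul, ite_smul, zero_smul, Finset.sum_add_distrib,
        Finset.sum_ite_eq', hβS, if_true]
      rw [← D.root_eq_sum α hαR]
    -- the map into (T β).erase β
    have hmaps : ∀ p ∈ U, p.1 + p.2 • β ∈ (T β).erase β := by
      rintro ⟨α, j⟩ hp
      obtain ⟨hroot, hcoef⟩ := hstring ⟨α, j⟩ hp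
      dsimp only at hroot hcoef
      obtain ⟨hαRP, hj⟩ := Finset.mem_sigma.mp hp
      dsimp only at hαRP hj
      obtain ⟨hj1, hj2⟩ := Finset.mem_Icc.mp hj
      have hαR : α ∈ D.R := D.Rpos_subset α (D.RP_subset_Rpos hαRP)
      have hpar := D.not_par hsub hαRP hβS hβP
      have hαβ0 : D.coeff α β = 0 := D.coeff_zero_of_mem_RP hsub hαRP β hβS hβP
      have hcβ : D.coeff (α + j • β) β = j := by
        rw [hcoef β hβS, hαβ0]; simp
      have hρpos : α + j • β ∈ D.Rpos :=
        D.mem_Rpos_of_coeff_pos hroot hβS (by rw [hcβ]; omega)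
      have hρne : α + j • β ≠ β := by
        intro heq
        apply hpar ((1 - j : ℤ) : ℝ)
        rw [Int.cast_smul_eq_zsmul, sub_smul, one_smul]
        exact eq_sub_of_add_eq heq
      rw [Finset.mem_erase]
      refine ⟨hρne, ?_⟩
      rw [hT]
      simp only [Finset.mem_filter, Finset.mem_sdiff]
      refine ⟨⟨hρpos, ?_⟩, ?_⟩
      · intro hmem
        have := D.coeff_zero_of_mem_RP hsub hmem β hβS hβP
        omega
      · intro γ hγ hγn hγβ
        rw [hcoef γ hγ, D.coeff_zero_of_mem_RP hsub hαRP γ hγ hγn]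
        simp [hγβ]
    -- injectivity
    have hinj : Set.InjOn (fun p : (_ : V) × ℤ => p.1 + p.2 • β) U := by
      rintro ⟨α, j⟩ hp ⟨α', j'⟩ hq heq
      dsimp only at heq
      obtain ⟨hroot, hcoef⟩ := hstring ⟨α, j⟩ (by exact_mod_cast hp)
      obtain ⟨hroot', hcoef'⟩ := hstring ⟨α', j'⟩ (by exact_mod_cast hq)
      dsimp only at hroot hcoef hroot' hcoef' 
      obtain ⟨hαRP, _⟩ := Finset.mem_sigma.mp (by exact_mod_cast hp : (⟨α, j⟩ : (_ : V) × ℤ) ∈ U)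
      obtain ⟨hαRP', _⟩ := Finset.mem_sigma.mp (by exact_mod_cast hq : (⟨α', j'⟩ : (_ : V) × ℤ) ∈ U)
      have hαβ0 : D.coeff α β = 0 := D.coeff_zero_of_mem_RP hsub hαRP β hβS hβP
      have hαβ0' : D.coeff α' β = 0 := D.coeff_zero_of_mem_RP hsub hαRP' β hβS hβP
      have hjj : j = j' := by
        have h1 := hcoef β hβS
        have h2 := hcoef' β hβS
        rw [heq] at h1
        rw [h1, hαβ0, hαβ0'] at h2
        simpa using h2
      subst hjj
      have hαα : α = α' := by
        have := heq
        exact add_right_cancel this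
      subst hαα
      rfl
    have hUle : U.card ≤ ((T β).erase β).card :=
      Finset.card_le_card_of_injOn _ hmaps hinj
    have herase : ((T β).erase β).card + 1 = (T β).card := Finset.card_erase_add_one hβT
    have h1 : D.n SP β = 2 + (U.card : ℤ) := by rw [hnval β, hUcard]
    omega
  -- conclusion
  have hd : ∀ β ∈ SC, (SC.gcd (fun β => D.n SP β)) ∣ D.n SP β :=
    fun β hβ => Finset.gcd_dvd hβ
  have hn2 : ∀ β ∈ SC, 2 ≤ D.n SP β := by
    intro β hβ
    rw [hnval β]
    have : 0 ≤ ∑ α ∈ D.RP SP, (-D.cartan α β) :=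
      Finset.sum_nonneg (fun α hα => hm β hβ α hα)
    omega
  have hdle : ∀ β ∈ SC, SC.gcd (fun β => D.n SP β) ≤ D.n SP β := by
    intro β hβ
    exact Int.le_of_dvd (by have := hn2 β hβ; omega) (hd β hβ)
  calc ((SC.card : ℤ)) * (SC.gcd (fun β => D.n SP β) - 1)
      = ∑ _β ∈ SC, (SC.gcd (fun β => D.n SP β) - 1) := by
        rw [Finset.sum_const, nsmul_eq_mul]
    _ ≤ ∑ β ∈ SC, ((T β).card : ℤ) := by
        apply Finset.sum_le_sum
        intro β hβ
        have h1 := hkey β hβ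
        have h2 := hdle β hβ
        omega
    _ = ((∑ β ∈ SC, (T β).card : ℕ) : ℤ) := by push_cast; rfl
    _ ≤ ((D.Rpos \ D.RP SP).card : ℤ) := by exact_mod_cast hcard
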